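/- Let X be a random variable distributed as the CIR process value V_t at time t > 0, started from x > 0, with parameters κ, θ, σ > 0 satisfying 2κθ/σ² > η for a real η. Then E[X^{-η}] = (κ/σ²)^η (sinh(κt/2))^{-2κθ/σ²} exp((κ/σ²)(κθ t + x - x·coth(κt/2))) · (1 + coth(κt/2))^{η - 2κθ/σ²} · (Γ(2κθ/σ² - η)/Γ(2κθ/σ²)) · ₁F₁(2κθ/σ² - η, 2κθ/σ², 2κx/(σ²(e^{κt}-1))), where ₁F₁ is the Kummer confluent hypergeometric function. -/

import Mathlib

open MeasureTheory Set

/-- Kummer's confluent hypergeometric function ₁F₁(a, b, z). -/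
noncomputable def oneF1 (a b z : ℝ) : ℝ :=
  ∑' n : ℕ, ((ascPochhammer ℝ n).eval a / (ascPochhammer ℝ n).eval b) * z ^ n / n.factorial

/-- Modified Bessel function of the first kind I_q(x) (for x > 0). -/
noncomputable def besselI (q x : ℝ) : ℝ :=
  ∑' n : ℕ, (x / 2) ^ (2 * n) * (x / 2) ^ q / (n.factorial * Real.Gamma (n + q + 1))

/-- Transition density of the CIR process at time t started from x:
    a scaled noncentral chi-squared density. -/
noncomputable def cirDensity (κ θ σ x t y : ℝ) : ℝ :=
  let c := 2 * κ / (σ ^ 2 * (1 - Real.exp (-κ * t)))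
  let u := c * x * Real.exp (-κ * t)
  let v := c * y
  let q := 2 * κ * θ / σ ^ 2 - 1
  c * Real.exp (-(u + v)) * (v / u) ^ (q / 2) * besselI q (2 * Real.sqrt (u * v))

/-!
Expanding `I_q` in its power series exhibits the CIR transition density as a Poisson mixture of
Gamma densities: with `ν = 2κθ/σ²`, rate `c` and noncentrality `u = c x e^{-κt}`, the `n`-th term
is `e^{-u} uⁿ/n!` times the Gamma`(ν + n, c)` density. Negative moments of Gamma laws are
explicit, `∫ y^{-η} γ_{a,c}(y) dy = c^η Γ(a - η)/Γ(a)` for `η < a`, and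
`Γ(ν + n - η)/Γ(ν + n) = Γ(ν - η)/Γ(ν) · (ν - η)ₙ/(ν)ₙ`, so integrating term by term (the terms
are nonnegative and the resulting Kummer series converges) gives
`e^{-u} c^η Γ(ν - η)/Γ(ν) ₁F₁(ν - η; ν; u)`. The hyperbolic form of the prefactor comes from
`coth(κt/2) = (e^{κt} + 1)/(e^{κt} - 1)`.
-/

open Real ProbabilityTheory
open scoped Nat

lemma Real.Gamma_add_nat_eq_mul_ascPochhammer {s : ℝ} (hs : 0 < s) (n : ℕ) :
    Gamma (s + n) = Gamma s * (ascPochhammer ℝ n).eval s := by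
  induction n with
  | zero => simp
  | succ n ih =>
    rw [Nat.cast_succ, ← add_assoc, Gamma_add_one (by positivity), ih, ascPochhammer_succ_eval]
    ring

lemma ascPochhammer_eval_le_pow_mul {a b M : ℝ} (ha : 0 ≤ a) (hb : 0 < b) (hM : 1 ≤ M)
    (hab : a ≤ M * b) (n : ℕ) :
    (ascPochhammer ℝ n).eval a ≤ M ^ n * (ascPochhammer ℝ n).eval b := by
  induction n with
  | zero => simp
  | succ n ih =>
    have hstep : a + n ≤ M * (b + n) := by nlinarith [n.cast_nonneg (α := ℝ)]
    have hb_n := ascPochhammer_pos n b hb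
    rw [ascPochhammer_succ_eval, ascPochhammer_succ_eval, pow_succ]
    calc (ascPochhammer ℝ n).eval a * (a + n)
        ≤ (M ^ n * (ascPochhammer ℝ n).eval b) * (M * (b + n)) :=
          mul_le_mul ih hstep (by positivity) (by positivity)
      _ = M ^ n * M * ((ascPochhammer ℝ n).eval b * (b + n)) := by ring

lemma summable_oneF1_term {a b : ℝ} (ha : 0 < a) (hb : 0 < b) (z : ℝ) :
    Summable fun n : ℕ =>
      (ascPochhammer ℝ n).eval a / (ascPochhammer ℝ n).eval b * z ^ n / n ! := by
  set M := 1 + a / b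
  have hM : 1 ≤ M := by simp only [M]; linarith [div_pos ha hb]
  have hab : a ≤ M * b := by simp only [M]; rw [add_mul, div_mul_cancel₀ a hb.ne']; linarith
  refine Summable.of_norm_bounded (Real.summable_pow_div_factorial (M * |z|)) fun n => ?_
  have ha_n := ascPochhammer_pos n a ha
  have hb_n := ascPochhammer_pos n b hb
  have hratio : (ascPochhammer ℝ n).eval a / (ascPochhammer ℝ n).eval b ≤ M ^ n :=
    (div_le_iff₀ hb_n).2 (ascPochhammer_eval_le_pow_mul ha.le hb hM hab n)
  rw [norm_div, norm_mul, norm_pow, Real.norm_of_nonneg (div_pos ha_n hb_n).le,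
    Real.norm_natCast, Real.norm_eq_abs, mul_pow]
  gcongr

lemma rpow_neg_mul_gammaPDFReal {a r η y : ℝ} (hy : 0 < y) :
    y ^ (-η) * gammaPDFReal a r y = r ^ a / Gamma a * (y ^ (a - η - 1) * exp (-(r * y))) := by
  rw [gammaPDFReal, if_pos hy.le, show a - η - 1 = -η + (a - 1) by ring, rpow_add hy]
  ring

lemma integrableOn_rpow_neg_mul_gammaPDFReal {a r η : ℝ} (hr : 0 < r) (hη : η < a) :
    IntegrableOn (fun y => y ^ (-η) * gammaPDFReal a r y) (Ioi 0) := by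
  have hint : IntegrableOn (fun y : ℝ => y ^ (a - η - 1) * exp (-(r * y))) (Ioi 0) := by
    simpa only [rpow_one, neg_mul] using
      integrableOn_rpow_mul_exp_neg_mul_rpow (p := 1) (s := a - η - 1) (by linarith) one_pos hr
  exact IntegrableOn.congr_fun (hint.const_mul (r ^ a / Gamma a))
    (fun y hy => (rpow_neg_mul_gammaPDFReal hy).symm) measurableSet_Ioi

lemma integral_rpow_neg_mul_gammaPDFReal {a r η : ℝ} (hr : 0 < r) (hη : η < a) :
    ∫ y in Ioi 0, y ^ (-η) * gammaPDFReal a r y = r ^ η * (Gamma (a - η) / Gamma a) := by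
  rw [setIntegral_congr_fun measurableSet_Ioi fun y hy => rpow_neg_mul_gammaPDFReal hy,
    integral_const_mul, integral_rpow_mul_exp_neg_mul_Ioi (by linarith) hr, one_div,
    inv_rpow hr.le, ← rpow_neg hr.le, div_mul_eq_mul_div, ← mul_assoc, ← rpow_add hr]
  ring_nf

noncomputable def poissonGammaMixturePDF (ν r u y : ℝ) : ℝ :=
  ∑' n : ℕ, exp (-u) * u ^ n / n ! * gammaPDFReal (ν + n) r y

lemma integral_rpow_neg_mul_gammaPDFReal_add_nat {ν r η : ℝ} (hν : 0 < ν) (hr : 0 < r)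
    (hη : η < ν) (n : ℕ) :
    ∫ y in Ioi 0, y ^ (-η) * gammaPDFReal (ν + n) r y
      = r ^ η * (Gamma (ν - η) / Gamma ν) *
        ((ascPochhammer ℝ n).eval (ν - η) / (ascPochhammer ℝ n).eval ν) := by
  rw [integral_rpow_neg_mul_gammaPDFReal hr (by linarith [n.cast_nonneg (α := ℝ)]),
    add_sub_right_comm, Gamma_add_nat_eq_mul_ascPochhammer (sub_pos.2 hη),
    Gamma_add_nat_eq_mul_ascPochhammer hν]
  field_simp

theorem integral_rpow_neg_mul_poissonGammaMixturePDF {ν r u η : ℝ} (hν : 0 < ν) (hr : 0 < r)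
    (hu : 0 ≤ u) (hη : η < ν) :
    ∫ y in Ioi 0, y ^ (-η) * poissonGammaMixturePDF ν r u y
      = exp (-u) * r ^ η * (Gamma (ν - η) / Gamma ν) * oneF1 (ν - η) ν u := by
  set F : ℕ → ℝ → ℝ := fun n y =>
    exp (-u) * u ^ n / n ! * (y ^ (-η) * gammaPDFReal (ν + n) r y)
  have hF_integral (n : ℕ) : ∫ y in Ioi 0, F n y
      = exp (-u) * r ^ η * (Gamma (ν - η) / Gamma ν) *
        ((ascPochhammer ℝ n).eval (ν - η) / (ascPochhammer ℝ n).eval ν * u ^ n / n !) := by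
    rw [integral_const_mul, integral_rpow_neg_mul_gammaPDFReal_add_nat hν hr hη]
    ring
  have hF_int (n : ℕ) : Integrable (F n) (volume.restrict (Ioi 0)) :=
    (integrableOn_rpow_neg_mul_gammaPDFReal hr
      (by linarith [n.cast_nonneg (α := ℝ)])).const_mul _
  have hF_norm (n : ℕ) : ∫ y in Ioi 0, ‖F n y‖ = ∫ y in Ioi 0, F n y := by
    refine setIntegral_congr_fun measurableSet_Ioi fun y hy => Real.norm_of_nonneg ?_
    have hγ := gammaPDFReal_nonneg (a := ν + n) (by positivity) hr y
    have hy' : 0 < y := hy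
    positivity
  have hF_sum : Summable fun n => ∫ y in Ioi 0, ‖F n y‖ := by
    simp_rw [hF_norm, hF_integral]
    exact (summable_oneF1_term (sub_pos.2 hη) hν u).mul_left _
  calc ∫ y in Ioi 0, y ^ (-η) * poissonGammaMixturePDF ν r u y
      = ∫ y in Ioi 0, ∑' n, F n y := by
        simp_rw [F, mul_left_comm _ (_ ^ (-η)), tsum_mul_left, poissonGammaMixturePDF]
    _ = ∑' n, ∫ y in Ioi 0, F n y := (integral_tsum_of_summable_integral_norm hF_int hF_sum).symm
    _ = _ := by simp_rw [hF_integral, tsum_mul_left, oneF1]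

lemma mul_exp_mul_rpow_mul_besselI_eq_poissonGammaMixturePDF {ν c u y : ℝ} (hν : 0 < ν)
    (hc : 0 < c) (hu : 0 < u) (hy : 0 < y) :
    c * exp (-(u + c * y)) * (c * y / u) ^ ((ν - 1) / 2) *
        besselI (ν - 1) (2 * √(u * (c * y)))
      = poissonGammaMixturePDF ν c u y := by
  rw [besselI, poissonGammaMixturePDF, ← tsum_mul_left]
  refine tsum_congr fun n => ?_
  have hΓ : 0 < Gamma (ν + n) := Gamma_pos_of_pos (by positivity)
  rw [gammaPDFReal, if_pos hy.le, show (n : ℝ) + (ν - 1) + 1 = ν + n by ring,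
    mul_div_cancel_left₀ _ two_ne_zero]
  refine log_injOn_pos (mem_Ioi.2 (by positivity)) (mem_Ioi.2 (by positivity)) ?_
  simp (disch := positivity) only [log_mul, log_div, log_rpow, log_pow, log_exp, log_sqrt]
  push_cast
  ring

lemma Real.sinh_mul_one_add_coth {a : ℝ} (ha : a ≠ 0) :
    sinh a * (1 + cosh a / sinh a) = exp a := by
  rw [mul_add, mul_one, mul_div_cancel₀ _ (sinh_ne_zero.2 ha), sinh_add_cosh]

lemma Real.coth_half_eq {a : ℝ} (ha : a ≠ 0) :
    cosh (a / 2) / sinh (a / 2) = (exp a + 1) / (exp a - 1) := by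
  have hsq : exp a = exp (a / 2) ^ 2 := by rw [← exp_nat_mul]; ring_nf
  have h1 : exp (a / 2) ^ 2 - 1 ≠ 0 := by
    rw [← hsq, sub_ne_zero, Ne, exp_eq_one_iff]; exact ha
  rw [cosh_eq, sinh_eq, exp_neg, hsq]
  field_simp

lemma cir_rate_eq {κ σ t : ℝ} (hκt : κ * t ≠ 0) :
    2 * κ / (σ ^ 2 * (1 - exp (-κ * t)))
      = κ / σ ^ 2 * (1 + cosh (κ * t / 2) / sinh (κ * t / 2)) := by
  have hexp : exp (κ * t) - 1 ≠ 0 := by rw [sub_ne_zero, Ne, exp_eq_one_iff]; exact hκt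
  rw [coth_half_eq hκt, neg_mul, exp_neg]
  field_simp
  ring

lemma cir_noncentrality_eq {κ σ x t : ℝ} (hκt : κ * t ≠ 0) :
    2 * κ * x / (σ ^ 2 * (exp (κ * t) - 1))
      = κ / σ ^ 2 * x * (cosh (κ * t / 2) / sinh (κ * t / 2) - 1) := by
  have hexp : exp (κ * t) - 1 ≠ 0 := by rw [sub_ne_zero, Ne, exp_eq_one_iff]; exact hκt
  rw [coth_half_eq hκt]
  field_simp
  ring

lemma cirDensity_eq_poissonGammaMixturePDF {κ θ σ x t y : ℝ} (hκ : 0 < κ) (hθ : 0 < θ)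
    (hσ : 0 < σ) (hx : 0 < x) (ht : 0 < t) (hy : 0 < y) :
    cirDensity κ θ σ x t y
      = poissonGammaMixturePDF (2 * κ * θ / σ ^ 2)
          (κ / σ ^ 2 * (1 + cosh (κ * t / 2) / sinh (κ * t / 2)))
          (2 * κ * x / (σ ^ 2 * (exp (κ * t) - 1))) y := by
  have hexp : exp (-κ * t) < 1 := exp_lt_one_iff.2 (by nlinarith)
  have hc : 0 < 2 * κ / (σ ^ 2 * (1 - exp (-κ * t))) := by
    have := sub_pos.2 hexp
    positivity
  have hu : 2 * κ / (σ ^ 2 * (1 - exp (-κ * t))) * x * exp (-κ * t)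
      = 2 * κ * x / (σ ^ 2 * (exp (κ * t) - 1)) := by
    have : exp (κ * t) - 1 ≠ 0 := (sub_pos.2 (one_lt_exp_iff.2 (by positivity))).ne'
    rw [neg_mul, exp_neg]
    field_simp
  have hu_pos : 0 < 2 * κ / (σ ^ 2 * (1 - exp (-κ * t))) * x * exp (-κ * t) := by positivity
  rw [← hu, ← cir_rate_eq (by positivity),
    ← mul_exp_mul_rpow_mul_besselI_eq_poissonGammaMixturePDF (by positivity) hc hu_pos hy]
  rfl

/-- Negative-moment formula for the CIR process: for 2κθ/σ² > η,
    E[X_t^{-η}] is given explicitly in terms of Γ and ₁F₁. -/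
theorem cir_negative_moment
    (κ θ σ x t η : ℝ) (hκ : 0 < κ) (hθ : 0 < θ) (hσ : 0 < σ) (hx : 0 < x) (ht : 0 < t)
    (hη : η < 2 * κ * θ / σ ^ 2) :
    ∫ y in Ioi (0 : ℝ), y ^ (-η) * cirDensity κ θ σ x t y
      = (κ / σ ^ 2) ^ η * (Real.sinh (κ * t / 2)) ^ (-(2 * κ * θ / σ ^ 2)) *
        Real.exp ((κ / σ ^ 2) *
          (κ * θ * t + x - x * (Real.cosh (κ * t / 2) / Real.sinh (κ * t / 2)))) *
        (1 + Real.cosh (κ * t / 2) / Real.sinh (κ * t / 2)) ^ (η - 2 * κ * θ / σ ^ 2) *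
        (Real.Gamma (2 * κ * θ / σ ^ 2 - η) / Real.Gamma (2 * κ * θ / σ ^ 2)) *
        oneF1 (2 * κ * θ / σ ^ 2 - η) (2 * κ * θ / σ ^ 2)
          (2 * κ * x / (σ ^ 2 * (Real.exp (κ * t) - 1))) := by
  have hκt : κ * t ≠ 0 := by positivity
  set ν := 2 * κ * θ / σ ^ 2
  set C := cosh (κ * t / 2) / sinh (κ * t / 2) with hC
  have h1C : 0 < 1 + C := by positivity
  have hu : 0 < 2 * κ * x / (σ ^ 2 * (exp (κ * t) - 1)) := by
    have := sub_pos.2 (one_lt_exp_iff.2 (show 0 < κ * t by positivity))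
    positivity
  have hexponent : -(2 * κ * x / (σ ^ 2 * (exp (κ * t) - 1)))
      = κ * t / 2 * (-ν) + κ / σ ^ 2 * (κ * θ * t + x - x * C) := by
    rw [cir_noncentrality_eq hκt, ← hC]
    simp only [ν]
    field_simp
    ring
  rw [setIntegral_congr_fun measurableSet_Ioi fun y hy => congrArg _
      (cirDensity_eq_poissonGammaMixturePDF hκ hθ hσ hx ht hy),
    integral_rpow_neg_mul_poissonGammaMixturePDF (by positivity) (by positivity) hu.le hη,
    hexponent, exp_add, exp_mul, ← sinh_mul_one_add_coth (by positivity),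
    mul_rpow (by positivity) h1C.le, mul_rpow (by positivity) h1C.le, sub_eq_add_neg η ν,
    rpow_add h1C]
  ring
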